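/- arXiv:2207.02627 — 10 statements merged into one kernel-verified Lean document; each statement's English description precedes it below -/
import Mathlib

section
/- If (x, y, z) is an integer solution of the double Fricke equation (x + y + z)² = 9xyz, then (x, 9xy − 2x − 2y − z, y) is also an integer solution. -/
theorem double_fricke_viete_L (x y z : ℤ) (h : (x + y + z)^2 = 9*x*y*z) :
    (x + (9*x*y - 2*x - 2*y - z) + y)^2 = 9*x*(9*x*y - 2*x - 2*y - z)*y := by
  linear_combination h
end

section
/- If (x, y, z) is an integer solution of the double Fricke equation (x + y + z)² = 9xyz, then (y, 9yz − 2y − 2z − x, z) is also an integer solution. -/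
theorem double_fricke_viete_R (x y z : ℤ) (h : (x + y + z)^2 = 9*x*y*z) :
    (y + (9*y*z - 2*y - 2*z - x) + z)^2 = 9*y*(9*y*z - 2*y - 2*z - x)*z := by
  linear_combination h
end

section
/- Let (m, n, k) be a triple of positive integers with (m + n + k)² = 9mnk, and set m₀ = 9nk − 2n − 2k − m. Then m₀ is a positive integer satisfying m·m₀ = (n + k)², and (m₀, n, k) is again a solution of (x + y + z)² = 9xyz. -/
theorem double_fricke_other_root (m n k : ℤ)
    (hm : 0 < m) (hn : 0 < n) (hk : 0 < k)
    (h : (m + n + k)^2 = 9*m*n*k) :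
    0 < 9*n*k - 2*n - 2*k - m ∧
    m * (9*n*k - 2*n - 2*k - m) = (n + k)^2 ∧
    ((9*n*k - 2*n - 2*k - m) + n + k)^2 = 9*(9*n*k - 2*n - 2*k - m)*n*k := by
  have h2 : m * (9*n*k - 2*n - 2*k - m) = (n + k)^2 := by linear_combination -h
  have hpos : 0 < 9*n*k - 2*n - 2*k - m := by
    have hp : 0 < m * (9*n*k - 2*n - 2*k - m) := by rw [h2]; positivity
    nlinarith [hp]
  exact ⟨hpos, h2, by linear_combination h⟩
end

section
/- For nonzero rationals P and Q, the triple ( (P² + Q² + 1)/(3Q), (P² + Q² + 1)/(3P), (P² + Q² + 1)/(3PQ) ) satisfies the Markov equation x² + y² + z² = 3xyz. -/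
theorem fricke_parametrization (P Q : ℚ) (hP : P ≠ 0) (hQ : Q ≠ 0) :
    ((P^2 + Q^2 + 1)/(3*Q))^2 + ((P^2 + Q^2 + 1)/(3*P))^2 + ((P^2 + Q^2 + 1)/(3*P*Q))^2 =
      3 * ((P^2 + Q^2 + 1)/(3*Q)) * ((P^2 + Q^2 + 1)/(3*P)) * ((P^2 + Q^2 + 1)/(3*P*Q)) := by
  field_simp
end

section
/- For nonzero rationals P and Q, the triple ( (P² + Q² + 1)²/(9Q²), (P² + Q² + 1)²/(9P²), (P² + Q² + 1)²/(9P²Q²) ) satisfies the double Fricke equation (x + y + z)² = 9xyz. -/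
theorem double_fricke_parametrization (P Q : ℚ) (hP : P ≠ 0) (hQ : Q ≠ 0) :
    ((P^2 + Q^2 + 1)^2/(9*Q^2) + (P^2 + Q^2 + 1)^2/(9*P^2) + (P^2 + Q^2 + 1)^2/(9*P^2*Q^2))^2 =
      9 * ((P^2 + Q^2 + 1)^2/(9*Q^2)) * ((P^2 + Q^2 + 1)^2/(9*P^2)) *
        ((P^2 + Q^2 + 1)^2/(9*P^2*Q^2)) := by
  field_simp
end

section
/- Let K be a field of characteristic zero, and let (a, b, c) and (m, n, k) be two points of the Fricke surface x² + y² + z² = 3xyz over K with (a − m)(b − n)(c − k) ≠ 0. Then the point (x, y, z) defined by x = (3(ank + bcm) − 2(am + bn + ck))/(3(b − n)(c − k)), y = (3(bmk + acn) − 2(am + bn + ck))/(3(a − m)(c − k)), z = (3(cmn + abk) − 2(am + bn + ck))/(3(a − m)(b − n)) also satisfies x² + y² + z² = 3xyz. -/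
/-!
The line through two points `P`, `Q` of the surface `F = 0`, `F = x² + y² + z² - 3xyz`, is
`t ↦ P + t (Q - P)`, and `F` restricted to it is a cubic in `t` vanishing at `t = 0` and `t = 1`.
Its leading coefficient is `-3uvw` and its linear coefficient is the derivative `D` of `F` at `P`
in the direction `(u, v, w) = Q - P`, so the third root is `t = -D / (3uvw)`. Substituting this `t`
and simplifying the numerators with `F(P) = 0` gives the stated coordinates.
-/

section CommRing

variable {R : Type*} [CommRing R]

def fricke (x y z : R) : R := x ^ 2 + y ^ 2 + z ^ 2 - 3 * x * y * z

/-- The derivative of `fricke` at `(a, b, c)` in the direction `(u, v, w)`. -/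
def frickeDeriv (a b c u v w : R) : R :=
  2 * (a * u + b * v + c * w) - 3 * (b * c * u + a * c * v + a * b * w)

theorem fricke_eq_zero_iff {x y z : R} :
    fricke x y z = 0 ↔ x ^ 2 + y ^ 2 + z ^ 2 = 3 * x * y * z :=
  sub_eq_zero

theorem fricke_lineMap_of_eq_zero {a b c m n k : R} (hP : fricke a b c = 0)
    (hQ : fricke m n k = 0) (t : R) :
    fricke (a + t * (m - a)) (b + t * (n - b)) (c + t * (k - c)) =
      -t * (t - 1) * (3 * (m - a) * (n - b) * (k - c) * t +
        frickeDeriv a b c (m - a) (n - b) (k - c)) := by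
  unfold fricke frickeDeriv at *
  linear_combination (1 - t ^ 2) * hP + t ^ 2 * hQ

end CommRing

theorem fricke_third_point {K : Type*} [Field K] {a b c m n k : K} (hP : fricke a b c = 0)
    (hQ : fricke m n k = 0) :
    let t := -frickeDeriv a b c (m - a) (n - b) (k - c) / (3 * (m - a) * (n - b) * (k - c))
    fricke (a + t * (m - a)) (b + t * (n - b)) (c + t * (k - c)) = 0 := by
  intro t
  rw [fricke_lineMap_of_eq_zero hP hQ]
  by_cases h : 3 * (m - a) * (n - b) * (k - c) = 0
  · simp [t, h]
  · simp [t, mul_div_cancel₀ _ h]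

theorem fricke_composition {K : Type*} [Field K] [CharZero K]
    (a b c m n k : K)
    (h1 : a^2 + b^2 + c^2 = 3*a*b*c) (h2 : m^2 + n^2 + k^2 = 3*m*n*k)
    (hne : (a - m)*(b - n)*(c - k) ≠ 0) :
    ((3*(a*n*k + b*c*m) - 2*(a*m + b*n + c*k))/(3*(b - n)*(c - k)))^2 +
    ((3*(b*m*k + a*c*n) - 2*(a*m + b*n + c*k))/(3*(a - m)*(c - k)))^2 +
    ((3*(c*m*n + a*b*k) - 2*(a*m + b*n + c*k))/(3*(a - m)*(b - n)))^2 =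
    3 * ((3*(a*n*k + b*c*m) - 2*(a*m + b*n + c*k))/(3*(b - n)*(c - k))) *
        ((3*(b*m*k + a*c*n) - 2*(a*m + b*n + c*k))/(3*(a - m)*(c - k))) *
        ((3*(c*m*n + a*b*k) - 2*(a*m + b*n + c*k))/(3*(a - m)*(b - n))) := by
  obtain ⟨⟨ha, hb⟩, hc⟩ : (a - m ≠ 0 ∧ b - n ≠ 0) ∧ c - k ≠ 0 := by
    simpa only [mul_ne_zero_iff] using hne
  have ha' : m - a ≠ 0 := sub_ne_zero_of_ne (sub_ne_zero.mp ha).symm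
  have hb' : n - b ≠ 0 := sub_ne_zero_of_ne (sub_ne_zero.mp hb).symm
  have hc' : k - c ≠ 0 := sub_ne_zero_of_ne (sub_ne_zero.mp hc).symm
  have key := fricke_third_point (fricke_eq_zero_iff.mpr h1) (fricke_eq_zero_iff.mpr h2)
  simp only [frickeDeriv] at key
  rw [← fricke_eq_zero_iff]
  convert key using 2
  · field_simp
    linear_combination -2 * (b - n) * (c - k) * h1
  · field_simp
    linear_combination -2 * (a - m) * (c - k) * h1
  · field_simp
    linear_combination -2 * (a - m) * (b - n) * h1
end

section
/- Let K be a field of characteristic zero, and let (a, b, c) and (m, n, k) be two points of the double Fricke surface (x + y + z)² = 9xyz over K with (a − m)(b − n)(c − k) ≠ 0. Then the point (x, y, z) defined by x = (9(ank + bcm) − 2(a + b + c)(m + n + k))/(9(b − n)(c − k)), y = (9(bmk + acn) − 2(a + b + c)(m + n + k))/(9(a − m)(c − k)), z = (9(cmn + abk) − 2(a + b + c)(m + n + k))/(9(a − m)(b − n)) also satisfies (x + y + z)² = 9xyz. -/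
/-!
Write `S = a + b + c`, `T = m + n + k`, and let `N_x, N_y, N_z` be the numerators of the three
coordinates and `E` the numerator of their sum over the common denominator `9(a-m)(b-n)(c-k)`;
the claim is `E² = N_x N_y N_z`. On the surface `a m N_x = (aT - mS)²` (and cyclically), and
`S T E = 9 (aT - mS)(bT - nS)(cT - kS)`. Hence
`S²T² E² = 81 Π (aT - mS)² = 81 abc mnk N_x N_y N_z = S²T² N_x N_y N_z`.
If `S T = 0`, then a point lies on one of the lines `a = 0, b + c = 0` (up to symmetry) of the
surface, where the identity is checked directly.
-/

/-- `chordNum a b c m n k / (9(b-n)(c-k))` is the `x`-coordinate of the third point; the other two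
are its cyclic shifts. -/
def chordNum {R : Type*} [CommRing R] (a b c m n k : R) : R :=
  9 * (a * n * k + b * c * m) - 2 * (a + b + c) * (m + n + k)

def chordSumNum {R : Type*} [CommRing R] (a b c m n k : R) : R :=
  chordNum a b c m n k * (a - m) + chordNum b c a n k m * (b - n) + chordNum c a b k m n * (c - k)

section CommRing

variable {R : Type*} [CommRing R] {a b c m n k : R}

theorem chordNum_comm (a b c m n k : R) : chordNum m n k a b c = chordNum a b c m n k := by
  unfold chordNum; ring

theorem chordSumNum_comm (a b c m n k : R) :
    chordSumNum m n k a b c = -chordSumNum a b c m n k := by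
  unfold chordSumNum chordNum; ring

theorem mul_mul_chordNum (h1 : (a + b + c) ^ 2 = 9 * a * b * c)
    (h2 : (m + n + k) ^ 2 = 9 * m * n * k) :
    a * m * chordNum a b c m n k = (a * (m + n + k) - m * (a + b + c)) ^ 2 := by
  unfold chordNum; linear_combination -a ^ 2 * h2 - m ^ 2 * h1

theorem sum_mul_sum_mul_chordSumNum (h1 : (a + b + c) ^ 2 = 9 * a * b * c)
    (h2 : (m + n + k) ^ 2 = 9 * m * n * k) :
    (a + b + c) * (m + n + k) * chordSumNum a b c m n k =
      9 * (a * (m + n + k) - m * (a + b + c)) * (b * (m + n + k) - n * (a + b + c)) *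
        (c * (m + n + k) - k * (a + b + c)) := by
  unfold chordSumNum chordNum
  linear_combination (a + b + c) ^ 2 * (m + n + k - (a + b + c)) * h2 +
    (m + n + k) ^ 2 * (m + n + k - (a + b + c)) * h1

theorem sq_mul_chordSumNum_sq (h1 : (a + b + c) ^ 2 = 9 * a * b * c)
    (h2 : (m + n + k) ^ 2 = 9 * m * n * k) :
    ((a + b + c) * (m + n + k)) ^ 2 * chordSumNum a b c m n k ^ 2 =
      ((a + b + c) * (m + n + k)) ^ 2 *
        (chordNum a b c m n k * chordNum b c a n k m * chordNum c a b k m n) := by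
  have hx := mul_mul_chordNum h1 h2
  have hy := mul_mul_chordNum (a := b) (b := c) (c := a) (m := n) (n := k) (k := m)
    (by linear_combination h1) (by linear_combination h2)
  have hz := mul_mul_chordNum (a := c) (b := a) (c := b) (m := k) (n := m) (k := n)
    (by linear_combination h1) (by linear_combination h2)
  calc ((a + b + c) * (m + n + k)) ^ 2 * chordSumNum a b c m n k ^ 2
      = ((a + b + c) * (m + n + k) * chordSumNum a b c m n k) ^ 2 := by ring
    _ = 81 * (a * (m + n + k) - m * (a + b + c)) ^ 2 * (b * (m + n + k) - n * (a + b + c)) ^ 2 *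
          (c * (m + n + k) - k * (a + b + c)) ^ 2 := by
      rw [sum_mul_sum_mul_chordSumNum h1 h2]; ring
    _ = 81 * (a * m * chordNum a b c m n k) * (b * n * chordNum b c a n k m) *
          (c * k * chordNum c a b k m n) := by
      rw [hx, hy, hz]; ring
    _ = (9 * a * b * c) * (9 * m * n * k) *
          (chordNum a b c m n k * chordNum b c a n k m * chordNum c a b k m n) := by ring
    _ = _ := by rw [← h1, ← h2]; ring

theorem chordSumNum_sq_of_sum_eq_zero [NoZeroDivisors R] (h2 : (m + n + k) ^ 2 = 9 * m * n * k)
    (hS : a + b + c = 0) (habc : a * b * c = 0) :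
    chordSumNum a b c m n k ^ 2 =
      chordNum a b c m n k * chordNum b c a n k m * chordNum c a b k m n := by
  obtain rfl : c = -a - b := by linear_combination hS
  unfold chordSumNum chordNum
  rcases mul_eq_zero.1 habc with hab | hc
  · rcases mul_eq_zero.1 hab with rfl | rfl
    · linear_combination 81 * b ^ 4 * m ^ 2 * h2
    · linear_combination 81 * a ^ 4 * n ^ 2 * h2
  · obtain rfl : b = -a := by linear_combination -hc
    linear_combination 81 * a ^ 4 * k ^ 2 * h2

theorem chordSumNum_sq [IsDomain R] [CharZero R] (h1 : (a + b + c) ^ 2 = 9 * a * b * c)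
    (h2 : (m + n + k) ^ 2 = 9 * m * n * k) :
    chordSumNum a b c m n k ^ 2 =
      chordNum a b c m n k * chordNum b c a n k m * chordNum c a b k m n := by
  by_cases hST : (a + b + c) * (m + n + k) = 0
  · have h9 : (9 : R) ≠ 0 := by norm_num
    rcases mul_eq_zero.1 hST with hS | hT
    · exact chordSumNum_sq_of_sum_eq_zero h2 hS (by simpa [h9, hS] using h1.symm)
    · have := chordSumNum_sq_of_sum_eq_zero h1 hT (by simpa [h9, hT] using h2.symm)
      rwa [chordSumNum_comm, neg_sq, chordNum_comm a b c m n k, chordNum_comm b c a n k m,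
        chordNum_comm c a b k m n] at this
  · exact mul_left_cancel₀ (pow_ne_zero 2 hST) (sq_mul_chordSumNum_sq h1 h2)

end CommRing

theorem sq_add_add_div_eq_of_sq_eq {K : Type*} [Field K] [CharZero K] {Nx Ny Nz A B C : K}
    (hA : A ≠ 0) (hB : B ≠ 0) (hC : C ≠ 0) (h : (Nx * A + Ny * B + Nz * C) ^ 2 = Nx * Ny * Nz) :
    (Nx / (9 * B * C) + Ny / (9 * A * C) + Nz / (9 * A * B)) ^ 2 =
      9 * (Nx / (9 * B * C)) * (Ny / (9 * A * C)) * (Nz / (9 * A * B)) := by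
  field_simp
  linear_combination h

theorem double_fricke_composition {K : Type*} [Field K] [CharZero K]
    (a b c m n k : K)
    (h1 : (a + b + c)^2 = 9*a*b*c) (h2 : (m + n + k)^2 = 9*m*n*k)
    (hne : (a - m)*(b - n)*(c - k) ≠ 0) :
    ((9*(a*n*k + b*c*m) - 2*(a + b + c)*(m + n + k))/(9*(b - n)*(c - k)) +
     (9*(b*m*k + a*c*n) - 2*(a + b + c)*(m + n + k))/(9*(a - m)*(c - k)) +
     (9*(c*m*n + a*b*k) - 2*(a + b + c)*(m + n + k))/(9*(a - m)*(b - n)))^2 =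
    9 * ((9*(a*n*k + b*c*m) - 2*(a + b + c)*(m + n + k))/(9*(b - n)*(c - k))) *
        ((9*(b*m*k + a*c*n) - 2*(a + b + c)*(m + n + k))/(9*(a - m)*(c - k))) *
        ((9*(c*m*n + a*b*k) - 2*(a + b + c)*(m + n + k))/(9*(a - m)*(b - n))) := by
  have ham : a - m ≠ 0 := left_ne_zero_of_mul (left_ne_zero_of_mul hne)
  have hbn : b - n ≠ 0 := right_ne_zero_of_mul (left_ne_zero_of_mul hne)
  have hck : c - k ≠ 0 := right_ne_zero_of_mul hne
  refine sq_add_add_div_eq_of_sq_eq ham hbn hck ?_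
  have key := chordSumNum_sq h1 h2
  unfold chordSumNum chordNum at key
  linear_combination key
end

section
/- Fix an integer n₀, and define b_r by b₀ = 1, b₁ = 3n₀, b_{r+2} = 3n₀·b_{r+1} − b_r. If the pair (m, k) satisfies m² + n₀² + k² = 3mn₀k, then for every r ≥ 2 the pair (m·b_r − k·b_{r−1}, m·b_{r−1} − k·b_{r−2}) also satisfies x² + n₀² + z² = 3x·n₀·z. -/
lemma vieta_step (n₀ x z : ℤ) (h : x^2 + n₀^2 + z^2 = 3*x*n₀*z) :
    (3*n₀*x - z)^2 + n₀^2 + x^2 = 3*(3*n₀*x - z)*n₀*x := by nlinarith [h]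

theorem chebyshev_like_quadric_orbit (n₀ : ℤ) (b : ℕ → ℤ)
    (hb0 : b 0 = 1) (hb1 : b 1 = 3 * n₀)
    (hrec : ∀ r, b (r + 2) = 3 * n₀ * b (r + 1) - b r)
    (m k : ℤ) (h : m^2 + n₀^2 + k^2 = 3*m*n₀*k) :
    ∀ r, 2 ≤ r →
      (m * b r - k * b (r - 1))^2 + n₀^2 + (m * b (r - 1) - k * b (r - 2))^2 =
        3 * (m * b r - k * b (r - 1)) * n₀ * (m * b (r - 1) - k * b (r - 2)) := by
  intro r hr
  induction r, hr using Nat.le_induction with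
  | base =>
      have h1 : (3*m*n₀ - k)^2 + n₀^2 + m^2 = 3*(3*m*n₀ - k)*n₀*m := by nlinarith [h]
      have h2 := vieta_step n₀ (3*m*n₀ - k) m h1
      simp only [show (2:ℕ) - 1 = 1 from rfl, show (2:ℕ) - 2 = 0 from rfl]
      have hb2 : b 2 = 3 * n₀ * b 1 - b 0 := hrec 0
      rw [hb0, hb1, hb2, hb0, hb1]
      ring_nf
      ring_nf at h2
      linarith [h2]
  | succ r hr ih =>
      have e1 : r + 1 - 1 = r := rfl
      have e2 : r + 1 - 2 = r - 1 := rfl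
      rw [e1, e2]
      have hr2 : r - 2 + 2 = r := by omega
      have hrec' : b (r + 1) = 3 * n₀ * b r - b (r - 1) := by
        have t := hrec (r - 1)
        rw [show r - 1 + 2 = r + 1 by omega, show r - 1 + 1 = r by omega] at t
        exact t
      have hrec'' : b r = 3 * n₀ * b (r-1) - b (r-2) := by
        have t := hrec (r - 2)
        rw [show r - 2 + 2 = r by omega, show r - 2 + 1 = r - 1 by omega] at t
        exact t
      have key := vieta_step n₀ (m * b r - k * b (r - 1)) (m * b (r - 1) - k * b (r - 2)) ih
      have hx : m * b (r+1) - k * b r = 3*n₀*(m * b r - k * b (r - 1)) - (m * b (r - 1) - k * b (r - 2)) := by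
        rw [hrec']
        linear_combination (-k) * hrec'' 
      rw [hx]
      linarith [key]
end

section
/- Fix a rational n₀ and suppose (m₀, k₀) satisfies m₀² + n₀² + k₀² = 3m₀n₀k₀ with m₀, n₀, k₀ nonzero. If (x₁, z₁) satisfies x₁² + n₀² + z₁² = 3x₁n₀z₁, then the point (x, z) with x = (x₁²n₀² + (x₁k₀ − z₁m₀)²)/(n₀²m₀) and z = (z₁²n₀² + (x₁k₀ − z₁m₀)²)/(n₀²k₀) also satisfies x² + n₀² + z² = 3x n₀ z. -/
/-!
For fixed `n`, `x² - 3nxz + z²` is the norm of `x - zω` in the quadratic algebra with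
`ω² = 3nω - 1`, so `Q_n` is the level set `norm = -n²`. With neutral element `O` the group law is
`P ⊕ Q = P Q / O`, which stays on that level set because the norm is multiplicative. The point in
the theorem is `P ⊕ P = P² / O`, once its coordinates are simplified with the equation of `O`.
-/

namespace QuadraticAlgebra

variable {K : Type*} [Field K] {a b : K}

/-- `P Q / O`, with `O⁻¹ = star O / norm O` written out since the algebra need not be a field. -/
def conicAdd (O P Q : QuadraticAlgebra K a b) : QuadraticAlgebra K a b :=
  O.norm⁻¹ • (P * Q * star O)

theorem norm_conicAdd {O : QuadraticAlgebra K a b} (hO : O.norm ≠ 0)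
    (P Q : QuadraticAlgebra K a b) : (conicAdd O P Q).norm = P.norm * Q.norm / O.norm := by
  rw [conicAdd, ← C_mul_eq_smul, C_eq_algebraMap, map_mul, norm_algebraMap, map_mul, map_mul,
    norm_star]
  field_simp

theorem norm_conicAdd_of_norm_eq {O P Q : QuadraticAlgebra K a b} (hO : O.norm ≠ 0)
    (hP : P.norm = O.norm) (hQ : Q.norm = O.norm) : (conicAdd O P Q).norm = O.norm := by
  rw [norm_conicAdd hO, hP, hQ]
  field_simp

end QuadraticAlgebra

open QuadraticAlgebra

variable {K : Type*} [Field K]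

def quadricPoint (n x z : K) : QuadraticAlgebra K (-1) (3 * n) := ⟨x, -z⟩

theorem norm_quadricPoint (n x z : K) :
    (quadricPoint n x z).norm = x ^ 2 - 3 * n * x * z + z ^ 2 := by
  simp only [quadricPoint, norm_def]
  ring

theorem mem_quadric_iff_norm_quadricPoint {n x z : K} :
    x ^ 2 + n ^ 2 + z ^ 2 = 3 * x * n * z ↔ (quadricPoint n x z).norm = -n ^ 2 := by
  rw [norm_quadricPoint]
  constructor <;> intro h <;> linear_combination h

theorem conicAdd_quadricPoint_self {n m k x z : K} (hn : n ≠ 0) (hm : m ≠ 0) (hk : k ≠ 0)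
    (hO : m ^ 2 + n ^ 2 + k ^ 2 = 3 * m * n * k) :
    conicAdd (quadricPoint n m k) (quadricPoint n x z) (quadricPoint n x z) =
      quadricPoint n ((x ^ 2 * n ^ 2 + (x * k - z * m) ^ 2) / (n ^ 2 * m))
        ((z ^ 2 * n ^ 2 + (x * k - z * m) ^ 2) / (n ^ 2 * k)) := by
  rw [conicAdd, mem_quadric_iff_norm_quadricPoint.1 hO]
  ext <;> simp only [quadricPoint, re_smul, im_smul, re_mul, im_mul, re_star, im_star, smul_eq_mul]
    <;> field_simp
  · linear_combination -x ^ 2 * hO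
  · linear_combination z ^ 2 * hO

theorem quadric_doubling (n₀ m₀ k₀ x₁ z₁ : ℚ)
    (hm₀ : m₀ ≠ 0) (hn₀ : n₀ ≠ 0) (hk₀ : k₀ ≠ 0)
    (hO : m₀^2 + n₀^2 + k₀^2 = 3*m₀*n₀*k₀)
    (hP : x₁^2 + n₀^2 + z₁^2 = 3*x₁*n₀*z₁) :
    ((x₁^2*n₀^2 + (x₁*k₀ - z₁*m₀)^2)/(n₀^2*m₀))^2 + n₀^2 +
      ((z₁^2*n₀^2 + (x₁*k₀ - z₁*m₀)^2)/(n₀^2*k₀))^2 =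
    3 * ((x₁^2*n₀^2 + (x₁*k₀ - z₁*m₀)^2)/(n₀^2*m₀)) * n₀ *
        ((z₁^2*n₀^2 + (x₁*k₀ - z₁*m₀)^2)/(n₀^2*k₀)) := by
  have hO' := mem_quadric_iff_norm_quadricPoint.1 hO
  have hP' := mem_quadric_iff_norm_quadricPoint.1 hP
  have hnorm : (quadricPoint n₀ m₀ k₀).norm ≠ 0 := hO' ▸ neg_ne_zero.2 (pow_ne_zero 2 hn₀)
  rw [mem_quadric_iff_norm_quadricPoint, ← conicAdd_quadricPoint_self hn₀ hm₀ hk₀ hO,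
    norm_conicAdd_of_norm_eq hnorm (hP'.trans hO'.symm) (hP'.trans hO'.symm), hO']
end

section
/- Fix a rational n₀ and a point O = (m₀, k₀) on the quadric x² + n₀² + z² = 3x n₀ z. Let (x₁, z₁) and (x₂, z₂) be two points on the quadric with x₁ ≠ x₂, and set μ = (z₂ − z₁)/(x₂ − x₁). Assume 1 + μ² − 3n₀μ ≠ 0. Then the point (x, z) with x = (μ²m₀ − m₀ − 2μk₀ + 3n₀k₀)/(1 + μ² − 3n₀μ) and z = (k₀ − 2m₀μ − μ²k₀ + 3m₀n₀μ²)/(1 + μ² − 3n₀μ) satisfies x² + n₀² + z² = 3x n₀ z. -/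
/-!
Restricted to the line through `O = (m₀, k₀)` with slope `μ`, the equation of the quadric becomes
a quadratic in the parameter `t` with root `t = 0` (the point `O` itself). The point in the formula
is `O + t (1, μ)` for the other root `t`, which exists as soon as the leading coefficient
`1 + μ² - 3n₀μ` is nonzero.
-/

namespace MarkovQuadric

variable {K : Type*} [Field K]

def eval (n x z : K) : K := x ^ 2 + n ^ 2 + z ^ 2 - 3 * x * n * z

lemma eval_add_mul (n m k μ t : K) :
    eval n (m + t) (k + μ * t) =
      eval n m k + t * (t * (1 + μ ^ 2 - 3 * n * μ) + (2 * m + 2 * μ * k - 3 * n * (k + μ * m))) := by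
  unfold eval
  ring

lemma eval_add_mul_eq_zero {n m k μ t : K} (hO : eval n m k = 0)
    (ht : t * (1 + μ ^ 2 - 3 * n * μ) + (2 * m + 2 * μ * k - 3 * n * (k + μ * m)) = 0) :
    eval n (m + t) (k + μ * t) = 0 := by
  rw [eval_add_mul, hO, ht, mul_zero, add_zero]

lemma secondIntersection_mem {n m k μ : K} (hO : m ^ 2 + n ^ 2 + k ^ 2 = 3 * m * n * k)
    (hD : 1 + μ ^ 2 - 3 * n * μ ≠ 0) :
    ((μ ^ 2 * m - m - 2 * μ * k + 3 * n * k) / (1 + μ ^ 2 - 3 * n * μ)) ^ 2 + n ^ 2 +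
      ((k - 2 * m * μ - μ ^ 2 * k + 3 * m * n * μ ^ 2) / (1 + μ ^ 2 - 3 * n * μ)) ^ 2 =
    3 * ((μ ^ 2 * m - m - 2 * μ * k + 3 * n * k) / (1 + μ ^ 2 - 3 * n * μ)) * n *
      ((k - 2 * m * μ - μ ^ 2 * k + 3 * m * n * μ ^ 2) / (1 + μ ^ 2 - 3 * n * μ)) := by
  set t := -(2 * m + 2 * μ * k - 3 * n * (k + μ * m)) / (1 + μ ^ 2 - 3 * n * μ)
  have ht : t * (1 + μ ^ 2 - 3 * n * μ) + (2 * m + 2 * μ * k - 3 * n * (k + μ * m)) = 0 := by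
    rw [div_mul_cancel₀ _ hD, neg_add_cancel]
  have hx : (μ ^ 2 * m - m - 2 * μ * k + 3 * n * k) / (1 + μ ^ 2 - 3 * n * μ) = m + t := by
    rw [div_eq_iff hD]
    linear_combination -ht
  have hz : (k - 2 * m * μ - μ ^ 2 * k + 3 * m * n * μ ^ 2) / (1 + μ ^ 2 - 3 * n * μ)
      = k + μ * t := by
    rw [div_eq_iff hD]
    linear_combination -μ * ht
  rw [hx, hz, ← sub_eq_zero]
  exact eval_add_mul_eq_zero (sub_eq_zero.mpr hO) ht

end MarkovQuadric

theorem quadric_addition_general (n₀ m₀ k₀ x₁ z₁ x₂ z₂ : ℚ)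
    (hO : m₀^2 + n₀^2 + k₀^2 = 3*m₀*n₀*k₀)
    (hden : 1 + ((z₂ - z₁)/(x₂ - x₁))^2 - 3*n₀*((z₂ - z₁)/(x₂ - x₁)) ≠ 0) :
    ((((z₂ - z₁)/(x₂ - x₁))^2*m₀ - m₀ - 2*((z₂ - z₁)/(x₂ - x₁))*k₀ + 3*n₀*k₀) /
      (1 + ((z₂ - z₁)/(x₂ - x₁))^2 - 3*n₀*((z₂ - z₁)/(x₂ - x₁))))^2 + n₀^2 +
    ((k₀ - 2*m₀*((z₂ - z₁)/(x₂ - x₁)) - ((z₂ - z₁)/(x₂ - x₁))^2*k₀ +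
        3*m₀*n₀*((z₂ - z₁)/(x₂ - x₁))^2) /
      (1 + ((z₂ - z₁)/(x₂ - x₁))^2 - 3*n₀*((z₂ - z₁)/(x₂ - x₁))))^2 =
    3 * ((((z₂ - z₁)/(x₂ - x₁))^2*m₀ - m₀ - 2*((z₂ - z₁)/(x₂ - x₁))*k₀ + 3*n₀*k₀) /
      (1 + ((z₂ - z₁)/(x₂ - x₁))^2 - 3*n₀*((z₂ - z₁)/(x₂ - x₁)))) * n₀ *
    ((k₀ - 2*m₀*((z₂ - z₁)/(x₂ - x₁)) - ((z₂ - z₁)/(x₂ - x₁))^2*k₀ +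
        3*m₀*n₀*((z₂ - z₁)/(x₂ - x₁))^2) /
      (1 + ((z₂ - z₁)/(x₂ - x₁))^2 - 3*n₀*((z₂ - z₁)/(x₂ - x₁)))) :=
  MarkovQuadric.secondIntersection_mem hO hden

theorem quadric_addition (n₀ m₀ k₀ x₁ z₁ x₂ z₂ : ℚ)
    (hO : m₀^2 + n₀^2 + k₀^2 = 3*m₀*n₀*k₀)
    (hP₁ : x₁^2 + n₀^2 + z₁^2 = 3*x₁*n₀*z₁)
    (hP₂ : x₂^2 + n₀^2 + z₂^2 = 3*x₂*n₀*z₂)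
    (hx : x₁ ≠ x₂)
    (hden : 1 + ((z₂ - z₁)/(x₂ - x₁))^2 - 3*n₀*((z₂ - z₁)/(x₂ - x₁)) ≠ 0) :
    ((((z₂ - z₁)/(x₂ - x₁))^2*m₀ - m₀ - 2*((z₂ - z₁)/(x₂ - x₁))*k₀ + 3*n₀*k₀) /
      (1 + ((z₂ - z₁)/(x₂ - x₁))^2 - 3*n₀*((z₂ - z₁)/(x₂ - x₁))))^2 + n₀^2 +
    ((k₀ - 2*m₀*((z₂ - z₁)/(x₂ - x₁)) - ((z₂ - z₁)/(x₂ - x₁))^2*k₀ +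
        3*m₀*n₀*((z₂ - z₁)/(x₂ - x₁))^2) /
      (1 + ((z₂ - z₁)/(x₂ - x₁))^2 - 3*n₀*((z₂ - z₁)/(x₂ - x₁))))^2 =
    3 * ((((z₂ - z₁)/(x₂ - x₁))^2*m₀ - m₀ - 2*((z₂ - z₁)/(x₂ - x₁))*k₀ + 3*n₀*k₀) /
      (1 + ((z₂ - z₁)/(x₂ - x₁))^2 - 3*n₀*((z₂ - z₁)/(x₂ - x₁)))) * n₀ *
    ((k₀ - 2*m₀*((z₂ - z₁)/(x₂ - x₁)) - ((z₂ - z₁)/(x₂ - x₁))^2*k₀ +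
        3*m₀*n₀*((z₂ - z₁)/(x₂ - x₁))^2) /
      (1 + ((z₂ - z₁)/(x₂ - x₁))^2 - 3*n₀*((z₂ - z₁)/(x₂ - x₁)))) :=
  quadric_addition_general n₀ m₀ k₀ x₁ z₁ x₂ z₂ hO hden
end
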